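/- Let G be a simple graph on n vertices with m edges, let D = Σ_v deg(v)² be the sum of the squared degrees, and let 1 ≤ k ≤ n−1. Setting α = k/n, β = 2m/n², and τ = D/n³, one has s_k(G)/n² ≤ αβ + √(α(1−α)) · √(τ − β² + β/n). -/

import Mathlib

open Finset

namespace Brouwer

variable {V : Type*}

/-- The sum of the `k` largest values of `f` on a finite type, expressed as the
supremum over all `k`-element subsets of the sum of `f` over the subset. -/
noncomputable def sumKLargest [Fintype V] (f : V → ℝ) (k : ℕ) : ℝ :=
  sSup { x : ℝ | ∃ T : Finset V, T.card = k ∧ ∑ i ∈ T, f i = x }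

/-- The Laplacian matrix of a finite simple graph is Hermitian (real symmetric). -/
theorem lapMatrix_isHermitian [Fintype V] [DecidableEq V] (G : SimpleGraph V)
    [DecidableRel G.Adj] : (G.lapMatrix ℝ).IsHermitian := by
  rw [Matrix.IsHermitian, Matrix.conjTranspose_eq_transpose_of_trivial]
  exact G.isSymm_lapMatrix ℝ

/-- The adjacency matrix of a finite simple graph is Hermitian (real symmetric). -/
theorem adjMatrix_isHermitian [Fintype V] [DecidableEq V] (G : SimpleGraph V)
    [DecidableRel G.Adj] : (G.adjMatrix ℝ).IsHermitian := by
  rw [Matrix.IsHermitian, Matrix.conjTranspose_eq_transpose_of_trivial]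
  exact G.isSymm_adjMatrix

/-- The (multiset of) eigenvalues of the Laplacian matrix of `G`, indexed by vertices. -/
noncomputable def lapEig [Fintype V] [DecidableEq V] (G : SimpleGraph V) : V → ℝ := by
  classical exact (lapMatrix_isHermitian G).eigenvalues

/-- The (multiset of) eigenvalues of the adjacency matrix of `G`, indexed by vertices. -/
noncomputable def adjEig [Fintype V] [DecidableEq V] (G : SimpleGraph V) : V → ℝ := by
  classical exact (adjMatrix_isHermitian G).eigenvalues

/-- `sLap G k` is `s_k(G)`, the sum of the `k` largest Laplacian eigenvalues of `G`. -/
noncomputable def sLap [Fintype V] [DecidableEq V] (G : SimpleGraph V) (k : ℕ) : ℝ :=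
  sumKLargest (lapEig G) k

/-- The number of edges of `G`. -/
noncomputable def numEdges [Fintype V] (G : SimpleGraph V) : ℕ := by
  classical exact G.edgeFinset.card

/-- `BC G k`: Brouwer's conjectured inequality `s_k(G) ≤ m + (k+1 choose 2)`. -/
def BC [Fintype V] [DecidableEq V] (G : SimpleGraph V) (k : ℕ) : Prop :=
  sLap G k ≤ numEdges G + (k + 1).choose 2

/-- Number of edges of `G` with both endpoints in `S`. -/
noncomputable def edgesWithin [Fintype V] [DecidableEq V] (G : SimpleGraph V)
    (S : Finset V) : ℕ := by
  classical exact (G.edgeFinset.filter (fun e => ∀ v ∈ e, v ∈ S)).card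

/-- The adjacency spectral radius of `G`, i.e. the largest adjacency eigenvalue. -/
noncomputable def specRad [Fintype V] [DecidableEq V] (G : SimpleGraph V) : ℝ :=
  sumKLargest (adjEig G) 1

/-- The maximum subgraph spectral density `t(G)`:
the supremum of `ρ(G[S])/|S|` over nonempty vertex subsets `S`. -/
noncomputable def maxDensity [Fintype V] [DecidableEq V] (G : SimpleGraph V) : ℝ :=
  sSup { x : ℝ | ∃ S : Finset V, S.Nonempty ∧
    x = specRad (G.induce (↑S : Set V)) / (S.card : ℝ) }

/-- Edge-edit distance between two graphs on the same vertex set. -/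
noncomputable def editDistance [Fintype V] (G H : SimpleGraph V) : ℕ := by
  classical exact (symmDiff G.edgeFinset H.edgeFinset).card

/-- A split graph: the vertex set partitions into a clique and an independent set. -/
def IsSplit (G : SimpleGraph V) : Prop :=
  ∃ C : Set V, G.IsClique C ∧ Gᶜ.IsClique Cᶜ

/-- The splittance of `G`: the least number of edge edits needed to reach a split graph. -/
noncomputable def splittance [Fintype V] (G : SimpleGraph V) : ℕ :=
  sInf { d : ℕ | ∃ H : SimpleGraph V, IsSplit H ∧ editDistance G H = d }

/-- The join `G + K₁` of `G` with one new vertex adjacent to every vertex of `G`. -/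
def joinOne (G : SimpleGraph V) : SimpleGraph (Option V) where
  Adj x y := x ≠ y ∧ ∀ a, x = some a → ∀ b, y = some b → G.Adj a b
  symm := by
    constructor
    rintro x y ⟨hxy, h⟩
    exact ⟨hxy.symm, fun a ha b hb => (h b hb a ha).symm⟩
  loopless := by constructor; rintro x ⟨hxx, -⟩; exact hxx rfl

/-!
For every `k`-set `T` of eigenvalues, `∑_{i ∈ T} λᵢ - (k / n) ∑ λᵢ` is the covariance of the
eigenvalue vector with the indicator of `T`, so Cauchy–Schwarz bounds it by the product of their
standard deviations, `√(k - k² / n) · √(∑ λᵢ² - (∑ λᵢ)² / n)`. The first two spectral moments are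
traces: `∑ λᵢ = tr L = 2m` and `∑ λᵢ² = tr L² = ∑ deg(v)² + 2m`. Dividing by `n²` gives the
normalized form.
-/

theorem _root_.Matrix.IsHermitian.trace_pow_eq_sum_eigenvalues_pow {𝕜 n : Type*} [RCLike 𝕜]
    [Fintype n] [DecidableEq n] {A : Matrix n n 𝕜} (hA : A.IsHermitian) (p : ℕ) :
    (A ^ p).trace = ∑ i, (hA.eigenvalues i : 𝕜) ^ p := by
  conv_lhs => rw [hA.spectral_theorem, ← map_pow, Unitary.conjStarAlgAut_apply,
    Matrix.trace_mul_cycle, Unitary.coe_star_mul_self, one_mul, Matrix.diagonal_pow,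
    Matrix.trace_diagonal]
  rfl

section Covariance

variable {ι : Type*} (s : Finset ι) (f g : ι → ℝ)

theorem _root_.Finset.sum_sub_average_mul_sub_average :
    ∑ i ∈ s, (f i - (∑ j ∈ s, f j) / #s) * (g i - (∑ j ∈ s, g j) / #s) =
      ∑ i ∈ s, f i * g i - (∑ i ∈ s, f i) * (∑ i ∈ s, g i) / #s := by
  rcases s.eq_empty_or_nonempty with rfl | hs
  · simp
  have : (#s : ℝ) ≠ 0 := by positivity
  simp only [sub_mul, mul_sub, sum_sub_distrib, ← sum_mul, ← mul_sum, sum_const, nsmul_eq_mul]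
  field_simp
  ring

theorem _root_.Finset.sum_mul_sub_le_sqrt_mul_sqrt :
    ∑ i ∈ s, f i * g i - (∑ i ∈ s, f i) * (∑ i ∈ s, g i) / #s ≤
      √(∑ i ∈ s, f i ^ 2 - (∑ i ∈ s, f i) ^ 2 / #s) *
        √(∑ i ∈ s, g i ^ 2 - (∑ i ∈ s, g i) ^ 2 / #s) := by
  simpa only [← sum_sub_average_mul_sub_average, sq] using
    Real.sum_mul_le_sqrt_mul_sqrt s (fun i ↦ f i - (∑ j ∈ s, f j) / #s)
      (fun i ↦ g i - (∑ j ∈ s, g j) / #s)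

theorem _root_.Finset.sum_le_card_mul_average_add_sqrt_mul_sqrt [Fintype ι] (T : Finset ι) :
    ∑ i ∈ T, f i ≤ #T * (∑ i, f i) / Fintype.card ι +
      √(#T - #T ^ 2 / Fintype.card ι) *
        √(∑ i, f i ^ 2 - (∑ i, f i) ^ 2 / Fintype.card ι) := by
  classical
  have := sum_mul_sub_le_sqrt_mul_sqrt univ (fun i ↦ if i ∈ T then 1 else 0) f
  simp only [ite_pow, one_pow, zero_pow two_ne_zero, sum_boole, ite_mul, one_mul, zero_mul,
    sum_ite_mem, univ_inter, filter_mem_eq_inter, card_univ] at this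
  linarith

end Covariance

/- `0 ≤ b` covers `k > card V`, where no `k`-subset exists and `sSup ∅ = 0`. -/
theorem sumKLargest_le [Fintype V] {f : V → ℝ} {k : ℕ} {b : ℝ} (hb : 0 ≤ b)
    (h : ∀ T : Finset V, #T = k → ∑ i ∈ T, f i ≤ b) : sumKLargest f k ≤ b :=
  Real.sSup_le (by rintro _ ⟨T, hT, rfl⟩; exact h T hT) hb

theorem numEdges_eq [Fintype V] (G : SimpleGraph V) [DecidableRel G.Adj] :
    numEdges G = #G.edgeFinset := by
  unfold numEdges
  congr!

section Graph

open Matrix SimpleGraph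

variable [Fintype V] [DecidableEq V] (G : SimpleGraph V) [DecidableRel G.Adj]

theorem _root_.SimpleGraph.trace_lapMatrix {R : Type*} [Ring R] :
    (G.lapMatrix R).trace = ∑ v, (G.degree v : R) := by
  simp [lapMatrix, degMatrix, trace_sub]

theorem _root_.SimpleGraph.trace_lapMatrix_sq {R : Type*} [CommRing R] :
    (G.lapMatrix R ^ 2).trace = ∑ v, (G.degree v : R) ^ 2 + ∑ v, (G.degree v : R) := by
  have hDA : (G.degMatrix R * G.adjMatrix R).trace = 0 := by
    simp only [trace, diag_apply, degMatrix, diagonal_mul, adjMatrix_apply, SimpleGraph.irrefl,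
      if_false, mul_zero, sum_const_zero]
  simp only [lapMatrix, sq, sub_mul, mul_sub, trace_sub, trace_mul_comm (G.adjMatrix R), hDA]
  simp only [trace, diag_apply, adjMatrix_mul_self_apply_self, degMatrix, diagonal_mul_diagonal,
    diagonal_apply_eq]
  ring

theorem lapEig_eq : lapEig G = (lapMatrix_isHermitian G).eigenvalues := by
  unfold lapEig
  congr!

theorem sum_lapEig : ∑ v, lapEig G v = 2 * numEdges G := by
  have := (lapMatrix_isHermitian G).trace_pow_eq_sum_eigenvalues_pow 1
  simp only [pow_one, RCLike.ofReal_real_eq_id, id, G.trace_lapMatrix] at this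
  rw [lapEig_eq, ← this, numEdges_eq]
  exact_mod_cast G.sum_degrees_eq_twice_card_edges

theorem sum_lapEig_sq :
    ∑ v, lapEig G v ^ 2 = ∑ v, (G.degree v : ℝ) ^ 2 + 2 * numEdges G := by
  have := (lapMatrix_isHermitian G).trace_pow_eq_sum_eigenvalues_pow 2
  simp only [RCLike.ofReal_real_eq_id, id, G.trace_lapMatrix_sq] at this
  rw [lapEig_eq, ← this, numEdges_eq]
  exact_mod_cast congrArg _ G.sum_degrees_eq_twice_card_edges

end Graph

theorem sLap_le [Fintype V] [DecidableEq V] (G : SimpleGraph V) [DecidableRel G.Adj] (k : ℕ) :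
    sLap G k ≤ k * (2 * numEdges G) / Fintype.card V +
      √(k - k ^ 2 / Fintype.card V) * √(∑ v, (G.degree v : ℝ) ^ 2 + 2 * numEdges G -
        (2 * numEdges G) ^ 2 / Fintype.card V) := by
  refine sumKLargest_le (by positivity) fun T hT ↦ ?_
  simpa only [hT, sum_lapEig, sum_lapEig_sq] using
    sum_le_card_mul_average_add_sqrt_mul_sqrt (lapEig G) T

theorem sLap_variance_bound_general {V : Type*} [Fintype V] [DecidableEq V] (G : SimpleGraph V)
    [DecidableRel G.Adj] (k : ℕ)
    (n α β τ : ℝ) (hn : n = (Fintype.card V : ℝ)) (hα : α = (k : ℝ) / n)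
    (hβ : β = 2 * (numEdges G : ℝ) / n ^ 2)
    (hτ : τ = (∑ v : V, (G.degree v : ℝ) ^ 2) / n ^ 3) :
    sLap G k / n ^ 2 ≤ α * β + Real.sqrt (α * (1 - α)) * Real.sqrt (τ - β ^ 2 + β / n) := by
  obtain hn0 | hn0 := (show (0 : ℝ) ≤ n from hn ▸ Nat.cast_nonneg _).eq_or_lt
  · simp [← hn0, hα]
  set m : ℝ := (numEdges G : ℝ)
  set D : ℝ := ∑ v, (G.degree v : ℝ) ^ 2
  have hα' : α * (1 - α) = (k - k ^ 2 / n) / n := by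
    rw [hα]; field_simp
  have hX : τ - β ^ 2 + β / n = (D + 2 * m - (2 * m) ^ 2 / n) / n ^ 3 := by
    rw [hτ, hβ]; field_simp; ring
  have hsqrt : √n * √(n ^ 3) = n ^ 2 := by
    rw [← Real.sqrt_mul hn0.le, ← pow_succ', show n ^ 4 = (n ^ 2) ^ 2 by ring,
      Real.sqrt_sq (by positivity)]
  calc sLap G k / n ^ 2
      ≤ (k * (2 * m) / n + √(k - k ^ 2 / n) * √(D + 2 * m - (2 * m) ^ 2 / n)) / n ^ 2 := by
        gcongr; exact hn ▸ sLap_le G k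
    _ = _ := by
      rw [hα', hX, Real.sqrt_div' _ hn0.le, Real.sqrt_div' _ (by positivity), div_mul_div_comm,
        hsqrt, hα, hβ]
      field_simp

/-- with `α = k/n`, `β = 2m/n²`, `τ = (Σ_v deg(v)²)/n³`, one has
`s_k(G)/n² ≤ αβ + √(α(1-α)) · √(τ - β² + β/n)`. -/
theorem sLap_variance_bound {V : Type*} [Fintype V] [DecidableEq V] (G : SimpleGraph V)
    [DecidableRel G.Adj] (k : ℕ) (hk1 : 1 ≤ k) (hk2 : k ≤ Fintype.card V - 1)
    (n α β τ : ℝ) (hn : n = (Fintype.card V : ℝ)) (hα : α = (k : ℝ) / n)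
    (hβ : β = 2 * (numEdges G : ℝ) / n ^ 2)
    (hτ : τ = (∑ v : V, (G.degree v : ℝ) ^ 2) / n ^ 3) :
    sLap G k / n ^ 2 ≤ α * β + Real.sqrt (α * (1 - α)) * Real.sqrt (τ - β ^ 2 + β / n) :=
  sLap_variance_bound_general G k n α β τ hn hα hβ hτ

end Brouwer
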